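/- Let A be a symmetric traceless 4×4 real matrix. Then |A ⊙ A|² ≤ 6|A|⁴, where ⊙ is the Kulkarni–Nomizu product, (A⊙A)_{ijkl} = 2(A_{ik}A_{jl} − A_{il}A_{jk}). -/
import Mathlib


open Matrix BigOperators

set_option maxHeartbeats 1000000 in
/-- For a symmetric traceless `4 × 4` real matrix `A`, the squared norm of the
Kulkarni–Nomizu product of `A` with itself satisfies `|A ⊙ A|² ≤ 6 |A|⁴`. -/
theorem kulkarni_nomizu_self_norm_sq_le (A : Matrix (Fin 4) (Fin 4) ℝ)
    (hsymm : A.IsSymm) (htr : A.trace = 0) :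
    ∑ i, ∑ j, ∑ k, ∑ l, (2 * (A i k * A j l - A i l * A j k)) ^ 2
      ≤ 6 * (∑ i, ∑ j, (A i j) ^ 2) ^ 2 := by
  have hs : ∀ i j, A j i = A i j := fun i j => hsymm.apply i j
  have h10 : A 1 0 = A 0 1 := hs 0 1
  have h20 : A 2 0 = A 0 2 := hs 0 2
  have h30 : A 3 0 = A 0 3 := hs 0 3
  have h21 : A 2 1 = A 1 2 := hs 1 2
  have h31 : A 3 1 = A 1 3 := hs 1 3
  have h32 : A 3 2 = A 2 3 := hs 2 3
  simp only [Fin.sum_univ_four, h10, h20, h30, h21, h31, h32]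
  set a := A 0 0; set b := A 0 1; set c := A 0 2; set d := A 0 3
  set e := A 1 1; set f := A 1 2; set g := A 1 3
  set h := A 2 2; set i := A 2 3; set j := A 3 3
  linarith [sq_nonneg ((a^2+b^2+c^2+d^2) - (b^2+e^2+f^2+g^2)),
    sq_nonneg ((a^2+b^2+c^2+d^2) - (c^2+f^2+h^2+i^2)),
    sq_nonneg ((a^2+b^2+c^2+d^2) - (d^2+g^2+i^2+j^2)),
    sq_nonneg ((b^2+e^2+f^2+g^2) - (c^2+f^2+h^2+i^2)),
    sq_nonneg ((b^2+e^2+f^2+g^2) - (d^2+g^2+i^2+j^2)),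
    sq_nonneg ((c^2+f^2+h^2+i^2) - (d^2+g^2+i^2+j^2)),
    sq_nonneg (a*b+b*e+c*f+d*g), sq_nonneg (a*c+b*f+c*h+d*i),
    sq_nonneg (a*d+b*g+c*i+d*j), sq_nonneg (b*c+e*f+f*h+g*i),
    sq_nonneg (b*d+e*g+f*i+g*j), sq_nonneg (c*d+f*g+h*i+i*j)]
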